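/- Let f: V → R^d assign to each node of a finite graph the limiting aggregation m_v = e_v (e^T X) under symmetric normalization on the full connected graph G. Suppose instead each node v uses a subgraph extractor returning the induced subgraph on its closed 1-hop neighborhood, yielding m'_v = e'_v ((e')^T X') computed within that subgraph. Then for nodes u, v with equal full-graph degree but non-isomorphic closed 1-hop neighborhood induced subgraphs and generic features X (drawn from an absolutely continuous distribution), m'_u ≠ m'_v almost surely, while m_u = m_v deterministically. -/

import Mathlib

open Matrix MeasureTheory

/-! Equal degrees give equal full-graph weights `e u = e v`, hence `m_u = m_v`. On the ego-nets,
`m'_u - m'_v` is, column by column, the linear functional `x ↦ (e'_u(u) e'_u - e'_v(v) e'_v) ⬝ᵥ x`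
applied to the features. If its coefficient vector vanished, the two positive unit vectors `e'_u`
and `e'_v` would be proportional, hence equal, so `N[u]` and `N[v]` would be the same vertex set and
the identity would be an isomorphism of the ego-nets. Otherwise its kernel is a proper hyperplane,
which is Lebesgue-null and hence null for every absolutely continuous feature distribution. -/

lemma ae_dotProduct_ne_zero {ι : Type*} [Fintype ι] {μ : Measure (ι → ℝ)} (hμ : μ ≪ volume)
    {c : ι → ℝ} (hc : c ≠ 0) : ∀ᵐ x ∂μ, c ⬝ᵥ x ≠ 0 := by
  let ℓ : (ι → ℝ) →ₗ[ℝ] ℝ := dotProductBilin ℝ ℝ c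
  have hker : LinearMap.ker ℓ ≠ ⊤ := by
    rw [Ne, LinearMap.ker_eq_top]
    exact fun h => hc (dotProduct_self_eq_zero.mp (LinearMap.congr_fun h c))
  refine hμ (measure_mono_null (fun x hx => ?_) (Measure.addHaar_submodule volume _ hker))
  simpa [ℓ] using hx

lemma ae_pi_dotProduct_ne {ι κ : Type*} [Fintype ι] [Fintype κ] [Nonempty κ]
    {μ : Measure (ι → ℝ)} [SigmaFinite μ] (hμ : μ ≪ volume) {p q : ι → ℝ} (hpq : p ≠ q) :
    ∀ᵐ X ∂(Measure.pi fun _ : κ => μ), (fun j => p ⬝ᵥ X j) ≠ (fun j => q ⬝ᵥ X j) := by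
  obtain ⟨j⟩ := ‹Nonempty κ›
  filter_upwards [Measure.tendsto_eval_ae_ae (i := j) |>.eventually
    (ae_dotProduct_ne_zero hμ (sub_ne_zero.mpr hpq))] with X hX hEq
  exact hX (by rw [sub_dotProduct, sub_eq_zero]; exact congrFun hEq j)

lemma eq_of_smul_eq_smul_of_sum_sq_eq_one {ι : Type*} [Fintype ι] {p q : ι → ℝ} {a b : ℝ}
    (ha : 0 < a) (hb : 0 < b) (hp : ∑ i, p i ^ 2 = 1) (hq : ∑ i, q i ^ 2 = 1)
    (h : a • p = b • q) : p = q := by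
  have hpt : p = (b / a) • q := by
    rw [div_eq_inv_mul, mul_smul, ← h, smul_smul, inv_mul_cancel₀ ha.ne', one_smul]
  have ht : (b / a) ^ 2 = 1 := by
    simpa [hpt, mul_pow, ← Finset.mul_sum, hq] using hp
  have ht1 : b / a = 1 := by
    nlinarith [div_pos hb ha]
  rw [hpt, ht1, one_smul]

lemma pos_iff_of_support {ι : Type*} {P : ι → Prop} {p : ι → ℝ}
    (hsupp : ∀ i, ¬ P i → p i = 0) (hpos : ∀ i, P i → 0 < p i) (i : ι) : 0 < p i ↔ P i :=
  ⟨fun h => by_contra fun hP => h.ne' (hsupp i hP), hpos i⟩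

theorem stmt18_general (n dF : ℕ) (hdF : 0 < dF)
    (A : Matrix (Fin n) (Fin n) ℝ)
    (d : Fin n → ℝ)
    (e : Fin n → ℝ) (he : ∀ w, e w = Real.sqrt (d w / ∑ x, d x))
    (e' : Fin n → Fin n → ℝ)
    (hsupp : ∀ v w, ¬ (w = v ∨ A v w = 1) → e' v w = 0)
    (hpos : ∀ v w, (w = v ∨ A v w = 1) → 0 < e' v w)
    (hnorm : ∀ v, ∑ w, (e' v w) ^ 2 = 1)
    (μ : Measure (Fin n → ℝ)) [IsProbabilityMeasure μ] (hac : μ ≪ volume)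
    (u v : Fin n) (hdeg : d u = d v)
    (hniso : ¬ ∃ σ : {w : Fin n // w = u ∨ A u w = 1} ≃ {w : Fin n // w = v ∨ A v w = 1},
      ∀ a b : {w : Fin n // w = u ∨ A u w = 1}, A a.val b.val = A (σ a).val (σ b).val) :
    (∀ X : Fin dF → Fin n → ℝ,
      (fun j => e u * ∑ w, e w * X j w) = (fun j => e v * ∑ w, e w * X j w)) ∧
    (∀ᵐ X ∂(Measure.pi fun _ : Fin dF => μ),
      (fun j => e' u u * ∑ w, e' u w * X j w) ≠ (fun j => e' v v * ∑ w, e' v w * X j w)) := by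
  refine ⟨fun X => by rw [he u, he v, hdeg], ?_⟩
  have hcoeff : e' u u • e' u ≠ e' v v • e' v := by
    intro h
    have he'_eq := eq_of_smul_eq_smul_of_sum_sq_eq_one (hpos u u (.inl rfl)) (hpos v v (.inl rfl))
      (hnorm u) (hnorm v) h
    have hnbhd : ∀ w, (w = u ∨ A u w = 1) ↔ (w = v ∨ A v w = 1) := fun w => by
      rw [← pos_iff_of_support (hsupp u) (hpos u), ← pos_iff_of_support (hsupp v) (hpos v), he'_eq]
    exact hniso ⟨Equiv.subtypeEquivRight hnbhd, fun _ _ => rfl⟩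
  have : Nonempty (Fin dF) := ⟨⟨0, hdF⟩⟩
  simpa only [dotProduct, Pi.smul_apply, smul_eq_mul, mul_assoc, Finset.mul_sum] using ae_pi_dotProduct_ne (κ := Fin dF) hac hcoeff

/-- Consider the limiting full-graph GCN aggregation m_v = e_v (eᵀ X) and the subgraph
(1-hop ego-net) version m'_v = e'_v ((e')ᵀ X), where e'_[v] is the Perron eigenvector (padded
with zeros) of the symmetrically normalized adjacency (with self-loops) of the induced
subgraph on the closed 1-hop neighborhood N[v]. For nodes u, v with equal full-graph degree
but non-isomorphic ego-nets and features X with columns drawn from an absolutely continuous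
distribution: m'_u ≠ m'_v almost surely, while m_u = m_v deterministically. -/
theorem stmt18 (n dF : ℕ) (hn : 0 < n) (hdF : 0 < dF)
    (A : Matrix (Fin n) (Fin n) ℝ) (hsym : A.IsSymm)
    (h01 : ∀ i j, A i j = 0 ∨ A i j = 1) (hloopless : ∀ i, A i i = 0)
    (hconn : ∀ i j : Fin n, ∃ k : ℕ, 0 < ((A + 1) ^ k) i j)
    (d : Fin n → ℝ) (hd : ∀ i, d i = 1 + ∑ j, A i j)
    (e : Fin n → ℝ) (he : ∀ w, e w = Real.sqrt (d w / ∑ x, d x))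
    (e' : Fin n → Fin n → ℝ)
    (hsupp : ∀ v w, ¬ (w = v ∨ A v w = 1) → e' v w = 0)
    (hpos : ∀ v w, (w = v ∨ A v w = 1) → 0 < e' v w)
    (hnorm : ∀ v, ∑ w, (e' v w) ^ 2 = 1)
    (heig : ∀ v : Fin n,
      Matrix.mulVec
        (Matrix.of fun a b =>
          if (a = v ∨ A v a = 1) ∧ (b = v ∨ A v b = 1) then
            ((A + 1) a b) /
              (Real.sqrt (∑ x, if (a = v ∨ A v a = 1) ∧ (x = v ∨ A v x = 1)
                  then (A + 1) a x else 0) *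
               Real.sqrt (∑ x, if (b = v ∨ A v b = 1) ∧ (x = v ∨ A v x = 1)
                  then (A + 1) b x else 0))
          else 0)
        (e' v) = e' v)
    (μ : Measure (Fin n → ℝ)) [IsProbabilityMeasure μ] (hac : μ ≪ volume)
    (u v : Fin n) (hdeg : d u = d v)
    (hniso : ¬ ∃ σ : {w : Fin n // w = u ∨ A u w = 1} ≃ {w : Fin n // w = v ∨ A v w = 1},
      ∀ a b : {w : Fin n // w = u ∨ A u w = 1}, A a.val b.val = A (σ a).val (σ b).val) :
    (∀ X : Fin dF → Fin n → ℝ,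
      (fun j => e u * ∑ w, e w * X j w) = (fun j => e v * ∑ w, e w * X j w)) ∧
    (∀ᵐ X ∂(Measure.pi fun _ : Fin dF => μ),
      (fun j => e' u u * ∑ w, e' u w * X j w) ≠ (fun j => e' v v * ∑ w, e' v w * X j w)) :=
  stmt18_general n dF hdF A d e he e' hsupp hpos hnorm μ hac u v hdeg hniso
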